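/- Let H be Hermitian on ℋ_C ⊗ ℋ_R with the block structure H = H_C + H_R + F where F = ∑_q X_q Y_q with X_q|0⟩_C = 0, where |0⟩_C is the unique ground state of H_C with energy λ₀ and gap Δ. Then for any normalized state |ψ⟩ orthogonal to the subspace |0⟩_C ⊗ ℋ_R, the energy expectation satisfies ⟨ψ|H|ψ⟩ ≥ λ₀ + Δ + min spec(H_R) - ∑_q ‖X_q‖·‖Y_q‖. -/

import Mathlib

open Kronecker Matrix

/-- The operator (ℓ²→ℓ²) norm of a complex matrix. -/
noncomputable def opNorm {k : ℕ} (M : Matrix (Fin k) (Fin k) ℂ) : ℝ :=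
  ‖Matrix.toEuclideanCLM (𝕜 := ℂ) M‖

/-!
Split `⟨ψ|H|ψ⟩` into its three parts. Every slice `ψ(·, j)` is orthogonal to the ground state
of `H_C`, and the `λ₀`-eigenspace is spanned by it, so in an eigenbasis of `H_C` the slice only
has weight on eigenvalues `≥ λ₀ + Δ`; summing over `j` gives `⟨ψ|H_C ⊗ 1|ψ⟩ ≥ λ₀ + Δ`. In the
same way every slice `ψ(i, ·)` gives `⟨ψ|1 ⊗ H_R|ψ⟩ ≥ min spec H_R`. Each coupling term is
bounded by Cauchy–Schwarz after factoring `X ⊗ Y = (X ⊗ 1)(1 ⊗ Y)`, where the two factors act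
slice by slice and hence have norms at most `‖X‖` and `‖Y‖`.
-/

namespace Matrix

open WithLp

variable {𝕜 : Type*} [RCLike 𝕜] {n m : Type*} [Fintype n] [Fintype m]

section Euclidean

lemma norm_toLp_sq_eq_re_star_dotProduct (v : n → 𝕜) :
    ‖toLp 2 v‖ ^ 2 = RCLike.re (star v ⬝ᵥ v) := by
  rw [← inner_self_eq_norm_sq (𝕜 := 𝕜), EuclideanSpace.inner_toLp_toLp, dotProduct_comm]

lemma norm_star_dotProduct_le (u v : n → 𝕜) : ‖star u ⬝ᵥ v‖ ≤ ‖toLp 2 u‖ * ‖toLp 2 v‖ := by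
  rw [dotProduct_comm, ← EuclideanSpace.inner_toLp_toLp]
  exact norm_inner_le_norm _ _

end Euclidean

section Spectral

lemma star_dotProduct_conj_mulVec (U B : Matrix n n 𝕜) (w : n → 𝕜) :
    star w ⬝ᵥ (U * B * Uᴴ) *ᵥ w = star (Uᴴ *ᵥ w) ⬝ᵥ B *ᵥ (Uᴴ *ᵥ w) := by
  rw [← mulVec_mulVec, ← mulVec_mulVec, dotProduct_mulVec, star_mulVec,
    conjTranspose_conjTranspose]

variable [DecidableEq n]

lemma re_star_dotProduct_diagonal_mulVec (d : n → ℝ) (v : n → 𝕜) :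
    RCLike.re (star v ⬝ᵥ diagonal (RCLike.ofReal ∘ d) *ᵥ v) = ∑ i, d i * ‖v i‖ ^ 2 := by
  rw [dotProduct, map_sum]
  refine Finset.sum_congr rfl fun i _ => ?_
  rw [mulVec_diagonal, Pi.star_apply, Function.comp_apply, mul_left_comm, RCLike.star_def,
    RCLike.conj_mul, ← RCLike.ofReal_pow, ← RCLike.ofReal_mul, RCLike.ofReal_re]

variable {A : Matrix n n 𝕜}

lemma IsHermitian.eigenvectorBasis_ne_zero (hA : A.IsHermitian) (i : n) :
    (⇑(hA.eigenvectorBasis i) : n → 𝕜) ≠ 0 := fun h =>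
  hA.eigenvectorBasis.orthonormal.ne_zero i (WithLp.ofLp_injective 2 h)

lemma IsHermitian.mulVec_eigenvectorBasis' (hA : A.IsHermitian) (i : n) :
    A *ᵥ ⇑(hA.eigenvectorBasis i) = (hA.eigenvalues i : 𝕜) • ⇑(hA.eigenvectorBasis i) := by
  rw [hA.mulVec_eigenvectorBasis, RCLike.real_smul_eq_coe_smul (K := 𝕜)]

lemma IsHermitian.conjTranspose_eigenvectorUnitary_mulVec_apply (hA : A.IsHermitian)
    (w : n → 𝕜) (i : n) :
    ((hA.eigenvectorUnitary : Matrix n n 𝕜)ᴴ *ᵥ w) i = star ⇑(hA.eigenvectorBasis i) ⬝ᵥ w := by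
  simp [mulVec, dotProduct, conjTranspose_apply]

lemma IsHermitian.re_star_dotProduct_mulVec (hA : A.IsHermitian) (w : n → 𝕜) :
    RCLike.re (star w ⬝ᵥ A *ᵥ w) =
      ∑ i, hA.eigenvalues i * ‖star ⇑(hA.eigenvectorBasis i) ⬝ᵥ w‖ ^ 2 := by
  conv_lhs => rw [hA.spectral_theorem, Unitary.conjStarAlgAut_apply, star_eq_conjTranspose,
    star_dotProduct_conj_mulVec, re_star_dotProduct_diagonal_mulVec]
  simp only [hA.conjTranspose_eigenvectorUnitary_mulVec_apply]

lemma IsHermitian.re_star_dotProduct_self (hA : A.IsHermitian) (w : n → 𝕜) :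
    RCLike.re (star w ⬝ᵥ w) = ∑ i, ‖star ⇑(hA.eigenvectorBasis i) ⬝ᵥ w‖ ^ 2 := by
  rw [← norm_toLp_sq_eq_re_star_dotProduct, ← hA.eigenvectorBasis.sum_sq_norm_inner_right]
  simp only [EuclideanSpace.inner_eq_star_dotProduct, dotProduct_comm]

lemma IsHermitian.le_re_star_dotProduct_mulVec (hA : A.IsHermitian) {c : ℝ} {w : n → 𝕜}
    (h : ∀ i, c ≤ hA.eigenvalues i ∨ star ⇑(hA.eigenvectorBasis i) ⬝ᵥ w = 0) :
    c * RCLike.re (star w ⬝ᵥ w) ≤ RCLike.re (star w ⬝ᵥ A *ᵥ w) := by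
  rw [hA.re_star_dotProduct_self, hA.re_star_dotProduct_mulVec, Finset.mul_sum]
  refine Finset.sum_le_sum fun i _ => ?_
  rcases h i with hc | hw
  · exact mul_le_mul_of_nonneg_right hc (by positivity)
  · simp [hw]

lemma IsHermitian.le_re_star_dotProduct_mulVec_of_mem_lowerBounds (hA : A.IsHermitian) {c : ℝ}
    (hc : c ∈ lowerBounds {μ : ℝ | ∃ φ : n → 𝕜, φ ≠ 0 ∧ A *ᵥ φ = (μ : 𝕜) • φ}) (w : n → 𝕜) :
    c * RCLike.re (star w ⬝ᵥ w) ≤ RCLike.re (star w ⬝ᵥ A *ᵥ w) :=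
  hA.le_re_star_dotProduct_mulVec fun i =>
    .inl <| hc ⟨_, hA.eigenvectorBasis_ne_zero i, hA.mulVec_eigenvectorBasis' i⟩

lemma IsHermitian.le_re_star_dotProduct_mulVec_of_orthogonal_groundState (hA : A.IsHermitian)
    {lam0 Δ : ℝ} {g : n → 𝕜}
    (hgap : ∀ (v : n → 𝕜) (μ : ℝ), v ≠ 0 → A *ᵥ v = (μ : 𝕜) • v → μ = lam0 ∨ lam0 + Δ ≤ μ)
    (hsimple : ∀ v : n → 𝕜, A *ᵥ v = (lam0 : 𝕜) • v → ∃ c : 𝕜, v = c • g)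
    {w : n → 𝕜} (hw : star g ⬝ᵥ w = 0) :
    (lam0 + Δ) * RCLike.re (star w ⬝ᵥ w) ≤ RCLike.re (star w ⬝ᵥ A *ᵥ w) := by
  refine hA.le_re_star_dotProduct_mulVec fun i => ?_
  have hi := hA.mulVec_eigenvectorBasis' i
  refine (hgap _ _ (hA.eigenvectorBasis_ne_zero i) hi).symm.imp id fun h0 => ?_
  obtain ⟨c, hc⟩ := hsimple _ (h0 ▸ hi)
  rw [hc, star_smul, smul_dotProduct, hw, smul_zero]

end Spectral

section Slices

lemma dotProduct_prod_eq_sum_fst {R : Type*} [NonUnitalNonAssocSemiring R] (u v : n × m → R) :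
    u ⬝ᵥ v = ∑ i, (fun j => u (i, j)) ⬝ᵥ (fun j => v (i, j)) :=
  Fintype.sum_prod_type _

lemma dotProduct_prod_eq_sum_snd {R : Type*} [NonUnitalNonAssocSemiring R] (u v : n × m → R) :
    u ⬝ᵥ v = ∑ j, (fun i => u (i, j)) ⬝ᵥ (fun i => v (i, j)) :=
  Fintype.sum_prod_type_right _

lemma kronecker_one_mulVec_apply {R : Type*} [Semiring R] [DecidableEq m] (A : Matrix n n R)
    (v : n × m → R) (i : n) (j : m) :
    ((A ⊗ₖ (1 : Matrix m m R)) *ᵥ v) (i, j) = (A *ᵥ fun k => v (k, j)) i := by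
  simp [mulVec, dotProduct, Fintype.sum_prod_type, one_apply]

lemma one_kronecker_mulVec_apply {R : Type*} [Semiring R] [DecidableEq n] (B : Matrix m m R)
    (v : n × m → R) (i : n) (j : m) :
    (((1 : Matrix n n R) ⊗ₖ B) *ᵥ v) (i, j) = (B *ᵥ fun l => v (i, l)) j := by
  simp [mulVec, dotProduct, Fintype.sum_prod_type, one_apply]

lemma le_re_star_dotProduct_kronecker_one_mulVec [DecidableEq m] (A : Matrix n n 𝕜) {c : ℝ}
    {ψ : n × m → 𝕜}
    (h : ∀ j, c * RCLike.re (star (fun i => ψ (i, j)) ⬝ᵥ fun i => ψ (i, j)) ≤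
      RCLike.re (star (fun i => ψ (i, j)) ⬝ᵥ A *ᵥ fun i => ψ (i, j))) :
    c * RCLike.re (star ψ ⬝ᵥ ψ) ≤ RCLike.re (star ψ ⬝ᵥ (A ⊗ₖ (1 : Matrix m m 𝕜)) *ᵥ ψ) := by
  rw [dotProduct_prod_eq_sum_snd, dotProduct_prod_eq_sum_snd, map_sum, map_sum, Finset.mul_sum]
  refine Finset.sum_le_sum fun j _ => ?_
  simp only [kronecker_one_mulVec_apply]
  exact h j

lemma le_re_star_dotProduct_one_kronecker_mulVec [DecidableEq n] (B : Matrix m m 𝕜) {c : ℝ}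
    {ψ : n × m → 𝕜}
    (h : ∀ i, c * RCLike.re (star (fun j => ψ (i, j)) ⬝ᵥ fun j => ψ (i, j)) ≤
      RCLike.re (star (fun j => ψ (i, j)) ⬝ᵥ B *ᵥ fun j => ψ (i, j))) :
    c * RCLike.re (star ψ ⬝ᵥ ψ) ≤ RCLike.re (star ψ ⬝ᵥ ((1 : Matrix n n 𝕜) ⊗ₖ B) *ᵥ ψ) := by
  rw [dotProduct_prod_eq_sum_fst, dotProduct_prod_eq_sum_fst, map_sum, map_sum, Finset.mul_sum]
  refine Finset.sum_le_sum fun i _ => ?_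
  simp only [one_kronecker_mulVec_apply]
  exact h i

lemma star_dotProduct_slice_eq_zero [DecidableEq m] {g : n → 𝕜} {ψ : n × m → 𝕜}
    (h : ∀ φ : m → 𝕜, star (fun p : n × m => g p.1 * φ p.2) ⬝ᵥ ψ = 0) (j : m) :
    star g ⬝ᵥ (fun i => ψ (i, j)) = 0 := by
  have := h (Pi.single j 1)
  rw [dotProduct_prod_eq_sum_snd, Finset.sum_eq_single j] at this
  · simp only [Pi.star_apply, Pi.single_eq_same, mul_one] at this
    exact this
  · intro l _ hl
    simp [Pi.single_apply, hl]
  · simp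

lemma norm_toLp_prod_sq_eq_sum_fst (v : n × m → 𝕜) :
    ‖toLp 2 v‖ ^ 2 = ∑ i, ‖toLp 2 fun j => v (i, j)‖ ^ 2 := by
  simp only [norm_toLp_sq_eq_re_star_dotProduct]
  rw [dotProduct_prod_eq_sum_fst, map_sum]
  rfl

lemma norm_toLp_prod_sq_eq_sum_snd (v : n × m → 𝕜) :
    ‖toLp 2 v‖ ^ 2 = ∑ j, ‖toLp 2 fun i => v (i, j)‖ ^ 2 := by
  simp only [norm_toLp_sq_eq_re_star_dotProduct]
  rw [dotProduct_prod_eq_sum_snd, map_sum]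
  rfl

end Slices

end Matrix

section OpNorm

open WithLp

variable {k : ℕ} {κ : Type*} [Fintype κ] [DecidableEq κ]

lemma opNorm_nonneg (M : Matrix (Fin k) (Fin k) ℂ) : 0 ≤ opNorm M :=
  norm_nonneg _

lemma norm_toLp_mulVec_le (M : Matrix (Fin k) (Fin k) ℂ) (v : Fin k → ℂ) :
    ‖toLp 2 (M *ᵥ v)‖ ≤ opNorm M * ‖toLp 2 v‖ :=
  (toEuclideanCLM (𝕜 := ℂ) M).le_opNorm (toLp 2 v)

lemma norm_toLp_kronecker_one_mulVec_le (A : Matrix (Fin k) (Fin k) ℂ) (v : Fin k × κ → ℂ) :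
    ‖toLp 2 ((A ⊗ₖ (1 : Matrix κ κ ℂ)) *ᵥ v)‖ ≤ opNorm A * ‖toLp 2 v‖ := by
  refine le_of_pow_le_pow_left₀ two_ne_zero (mul_nonneg (opNorm_nonneg _) (norm_nonneg _)) ?_
  rw [mul_pow, norm_toLp_prod_sq_eq_sum_snd, norm_toLp_prod_sq_eq_sum_snd, Finset.mul_sum]
  refine Finset.sum_le_sum fun j _ => ?_
  simp only [kronecker_one_mulVec_apply, ← mul_pow]
  exact pow_le_pow_left₀ (norm_nonneg _) (norm_toLp_mulVec_le A _) 2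

lemma norm_toLp_one_kronecker_mulVec_le (B : Matrix (Fin k) (Fin k) ℂ) (v : κ × Fin k → ℂ) :
    ‖toLp 2 (((1 : Matrix κ κ ℂ) ⊗ₖ B) *ᵥ v)‖ ≤ opNorm B * ‖toLp 2 v‖ := by
  refine le_of_pow_le_pow_left₀ two_ne_zero (mul_nonneg (opNorm_nonneg _) (norm_nonneg _)) ?_
  rw [mul_pow, norm_toLp_prod_sq_eq_sum_fst, norm_toLp_prod_sq_eq_sum_fst, Finset.mul_sum]
  refine Finset.sum_le_sum fun i _ => ?_
  simp only [one_kronecker_mulVec_apply, ← mul_pow]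
  exact pow_le_pow_left₀ (norm_nonneg _) (norm_toLp_mulVec_le B _) 2

lemma norm_star_dotProduct_kronecker_mulVec_le {n m : ℕ} (X : Matrix (Fin n) (Fin n) ℂ)
    (Y : Matrix (Fin m) (Fin m) ℂ) (ψ : Fin n × Fin m → ℂ) :
    ‖star ψ ⬝ᵥ (X ⊗ₖ Y) *ᵥ ψ‖ ≤ opNorm X * opNorm Y * ‖toLp 2 ψ‖ ^ 2 := by
  have hXY : X ⊗ₖ Y =
      (X ⊗ₖ (1 : Matrix (Fin m) (Fin m) ℂ)) * ((1 : Matrix (Fin n) (Fin n) ℂ) ⊗ₖ Y) := by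
    rw [← mul_kronecker_mul, Matrix.mul_one, Matrix.one_mul]
  calc ‖star ψ ⬝ᵥ (X ⊗ₖ Y) *ᵥ ψ‖ ≤ ‖toLp 2 ψ‖ * ‖toLp 2 ((X ⊗ₖ Y) *ᵥ ψ)‖ :=
        norm_star_dotProduct_le _ _
    _ ≤ ‖toLp 2 ψ‖ * (opNorm X * ‖toLp 2 (((1 : Matrix (Fin n) (Fin n) ℂ) ⊗ₖ Y) *ᵥ ψ)‖) := by
        rw [hXY, ← mulVec_mulVec]
        gcongr
        exact norm_toLp_kronecker_one_mulVec_le X _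
    _ ≤ ‖toLp 2 ψ‖ * (opNorm X * (opNorm Y * ‖toLp 2 ψ‖)) := by
        gcongr
        · exact opNorm_nonneg X
        · exact norm_toLp_one_kronecker_mulVec_le Y ψ
    _ = opNorm X * opNorm Y * ‖toLp 2 ψ‖ ^ 2 := by ring

end OpNorm

theorem energy_lower_bound_outside_superstable_subspace_general
    {n m Q : ℕ} (HC : Matrix (Fin n) (Fin n) ℂ) (HR : Matrix (Fin m) (Fin m) ℂ)
    (X : Fin Q → Matrix (Fin n) (Fin n) ℂ) (Y : Fin Q → Matrix (Fin m) (Fin m) ℂ)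
    (lam0 Δ lamR : ℝ)
    (hHCherm : HC.IsHermitian) (hHRherm : HR.IsHermitian)
    (H : Matrix (Fin n × Fin m) (Fin n × Fin m) ℂ)
    (hH : H = HC ⊗ₖ (1 : Matrix (Fin m) (Fin m) ℂ)
        + (1 : Matrix (Fin n) (Fin n) ℂ) ⊗ₖ HR + ∑ q, X q ⊗ₖ Y q)
    (gC : Fin n → ℂ)
    (hgap : ∀ (v : Fin n → ℂ) (μ : ℝ), v ≠ 0 → HC.mulVec v = (μ : ℂ) • v →
      μ = lam0 ∨ lam0 + Δ ≤ μ)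
    (hsimple : ∀ v : Fin n → ℂ, HC.mulVec v = (lam0 : ℂ) • v → ∃ c : ℂ, v = c • gC)
    (hlamR : IsLeast {μ : ℝ | ∃ φ : Fin m → ℂ, φ ≠ 0 ∧ HR.mulVec φ = (μ : ℂ) • φ} lamR)
    (ψ : Fin n × Fin m → ℂ) (hnorm : star ψ ⬝ᵥ ψ = 1)
    (horth : ∀ φ : Fin m → ℂ,
      star (fun p : Fin n × Fin m => gC p.1 * φ p.2) ⬝ᵥ ψ = 0) :
    lam0 + Δ + lamR - ∑ q, opNorm (X q) * opNorm (Y q)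
      ≤ (star ψ ⬝ᵥ H.mulVec ψ).re := by
  have hψ : RCLike.re (star ψ ⬝ᵥ ψ) = 1 := by simp [hnorm]
  have hC : lam0 + Δ ≤ RCLike.re (star ψ ⬝ᵥ (HC ⊗ₖ (1 : Matrix (Fin m) (Fin m) ℂ)) *ᵥ ψ) := by
    simpa only [hψ, mul_one] using le_re_star_dotProduct_kronecker_one_mulVec HC fun j =>
      hHCherm.le_re_star_dotProduct_mulVec_of_orthogonal_groundState hgap hsimple
        (star_dotProduct_slice_eq_zero horth j)
  have hR : lamR ≤ RCLike.re (star ψ ⬝ᵥ ((1 : Matrix (Fin n) (Fin n) ℂ) ⊗ₖ HR) *ᵥ ψ) := by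
    simpa only [hψ, mul_one] using le_re_star_dotProduct_one_kronecker_mulVec HR (ψ := ψ) fun _ =>
      hHRherm.le_re_star_dotProduct_mulVec_of_mem_lowerBounds hlamR.2 _
  have hF (q : Fin Q) :
      -(opNorm (X q) * opNorm (Y q)) ≤ RCLike.re (star ψ ⬝ᵥ (X q ⊗ₖ Y q) *ᵥ ψ) := by
    have := norm_star_dotProduct_kronecker_mulVec_le (X q) (Y q) ψ
    rw [norm_toLp_sq_eq_re_star_dotProduct, hψ, mul_one] at this
    exact neg_le_of_abs_le ((RCLike.abs_re_le_norm _).trans this)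
  have hcoupling := Finset.sum_le_sum fun q (_ : q ∈ Finset.univ) => hF q
  rw [Finset.sum_neg_distrib] at hcoupling
  simp only [hH, add_mulVec, sum_mulVec, dotProduct_add, dotProduct_sum, Complex.add_re,
    Complex.re_sum]
  simp only [RCLike.re_to_complex] at hC hR hcoupling
  linarith

/-- Lower bound on states outside the superstable subspace: for
`H = H_C ⊗ 1 + 1 ⊗ H_R + ∑_q X_q ⊗ Y_q` with `X_q gC = 0`, where `gC` is the unique
ground state of `H_C` (energy `lam0`, gap `Δ`), any normalized `ψ` orthogonal to
`gC ⊗ ℋ_R` satisfies `⟨ψ|H|ψ⟩ ≥ lam0 + Δ + min spec H_R - ∑_q ‖X_q‖ ‖Y_q‖`. -/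
theorem energy_lower_bound_outside_superstable_subspace
    {n m Q : ℕ} (HC : Matrix (Fin n) (Fin n) ℂ) (HR : Matrix (Fin m) (Fin m) ℂ)
    (X : Fin Q → Matrix (Fin n) (Fin n) ℂ) (Y : Fin Q → Matrix (Fin m) (Fin m) ℂ)
    (lam0 Δ lamR : ℝ)
    (hHCherm : HC.IsHermitian) (hHRherm : HR.IsHermitian)
    (H : Matrix (Fin n × Fin m) (Fin n × Fin m) ℂ)
    (hH : H = HC ⊗ₖ (1 : Matrix (Fin m) (Fin m) ℂ)
        + (1 : Matrix (Fin n) (Fin n) ℂ) ⊗ₖ HR + ∑ q, X q ⊗ₖ Y q)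
    (hHerm : H.IsHermitian)
    (gC : Fin n → ℂ) (hgC : gC ≠ 0) (heig : HC.mulVec gC = (lam0 : ℂ) • gC)
    (hΔ : 0 < Δ)
    (hgap : ∀ (v : Fin n → ℂ) (μ : ℝ), v ≠ 0 → HC.mulVec v = (μ : ℂ) • v →
      μ = lam0 ∨ lam0 + Δ ≤ μ)
    (hsimple : ∀ v : Fin n → ℂ, HC.mulVec v = (lam0 : ℂ) • v → ∃ c : ℂ, v = c • gC)
    (hX : ∀ q, (X q).mulVec gC = 0)
    (hlamR : IsLeast {μ : ℝ | ∃ φ : Fin m → ℂ, φ ≠ 0 ∧ HR.mulVec φ = (μ : ℂ) • φ} lamR)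
    (ψ : Fin n × Fin m → ℂ) (hnorm : star ψ ⬝ᵥ ψ = 1)
    (horth : ∀ φ : Fin m → ℂ,
      star (fun p : Fin n × Fin m => gC p.1 * φ p.2) ⬝ᵥ ψ = 0) :
    lam0 + Δ + lamR - ∑ q, opNorm (X q) * opNorm (Y q)
      ≤ (star ψ ⬝ᵥ H.mulVec ψ).re :=
  energy_lower_bound_outside_superstable_subspace_general HC HR X Y lam0 Δ lamR hHCherm hHRherm H hH
    gC hgap hsimple hlamR ψ hnorm horth
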